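/- arXiv:1805.03848 — 5 statements merged into one kernel-verified Lean document; each statement's English description precedes it below -/
import Mathlib

section
/- Any two nonempty closed u-saturated subsets A and B of M have nonempty intersection. (This is the core step in the proof that a usu-accessible partially hyperbolic diffeomorphism has a unique minimal set for the strong unstable foliation, Theorem 1(1).) -/
/-- Let `M` be a nonempty compact metric space, `f` a homeomorphism of `M`,
and `𝒰` an unstable partition for `f`. If `(f, 𝒰)` is usu-accessible with constants `K > 0`
and `λ ∈ (0,1)`, then any two nonempty closed u-saturated subsets `A` and `B` of `M`
have nonempty intersection. -/
theorem stmt0_closed_usaturated_sets_intersect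
    {M : Type*} [MetricSpace M] [CompactSpace M] [Nonempty M]
    (f : M ≃ₜ M) (𝒰 : M → Set M)
    (h_self : ∀ x : M, x ∈ 𝒰 x)
    (h_part : ∀ x y : M, y ∈ 𝒰 x → 𝒰 y = 𝒰 x)
    (h_inv : ∀ x : M, (⇑f) '' (𝒰 x) = 𝒰 (f x))
    (K l : ℝ) (hK : 0 < K) (hl : 0 < l) (hl1 : l < 1)
    (h_acc : ∀ x y : M, ∃ p q : M, p ∈ 𝒰 x ∧ y ∈ 𝒰 q ∧
      ∀ n : ℕ, dist ((⇑f)^[n] p) ((⇑f)^[n] q) ≤ K * l ^ n)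
    (A B : Set M)
    (hA_ne : A.Nonempty) (hA_cl : IsClosed A) (hA_sat : ∀ x ∈ A, 𝒰 x ⊆ A)
    (hB_ne : B.Nonempty) (hB_cl : IsClosed B) (hB_sat : ∀ x ∈ B, 𝒰 x ⊆ B) :
    (A ∩ B).Nonempty := by
  -- iterated invariance
  have h_invn : ∀ (n : ℕ) (x : M), (⇑f)^[n] '' (𝒰 x) = 𝒰 ((⇑f)^[n] x) := by
    intro n
    induction n with
    | zero => intro x; simp
    | succ n ih =>
        intro x
        calc (⇑f)^[n+1] '' (𝒰 x) = ⇑f '' ((⇑f)^[n] '' (𝒰 x)) := by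
              rw [Function.iterate_succ', Set.image_comp]
          _ = 𝒰 ((⇑f)^[n+1] x) := by
              rw [ih, h_inv, Function.iterate_succ', Function.comp_apply]
  have hli : Function.LeftInverse ⇑f ⇑f.symm := f.apply_symm_apply
  have hln : ∀ (n : ℕ) (x : M), (⇑f)^[n] ((⇑f.symm)^[n] x) = x :=
    fun n x => hli.iterate n x
  obtain ⟨a, ha⟩ := hA_ne
  obtain ⟨b, hb⟩ := hB_ne
  -- for each n, produce points in A and B at distance ≤ K l^n
  have key : ∀ n : ℕ, ∃ x y : M, x ∈ A ∧ y ∈ B ∧ dist x y ≤ K * l ^ n := by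
    intro n
    obtain ⟨p, q, hp, hq, hd⟩ := h_acc ((⇑f.symm)^[n] a) ((⇑f.symm)^[n] b)
    refine ⟨(⇑f)^[n] p, (⇑f)^[n] q, ?_, ?_, hd n⟩
    · have : (⇑f)^[n] p ∈ (⇑f)^[n] '' (𝒰 ((⇑f.symm)^[n] a)) := ⟨p, hp, rfl⟩
      rw [h_invn, hln] at this
      exact hA_sat a ha this
    · have hb' : b ∈ 𝒰 ((⇑f)^[n] q) := by
        have : (⇑f)^[n] ((⇑f.symm)^[n] b) ∈ (⇑f)^[n] '' (𝒰 q) := ⟨_, hq, rfl⟩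
        rwa [hln, h_invn] at this
      have := h_part _ _ hb'
      have hy : (⇑f)^[n] q ∈ 𝒰 b := by rw [this]; exact h_self _
      exact hB_sat b hb hy
  choose x y hx hy hd using key
  obtain ⟨c, hcA, φ, hφ, hconv⟩ := hA_cl.isCompact.tendsto_subseq hx
  -- y ∘ φ also tends to c
  have hK0 : Filter.Tendsto (fun n => K * l ^ n) Filter.atTop (nhds 0) := by
    have := tendsto_pow_atTop_nhds_zero_of_lt_one hl.le hl1
    simpa using this.const_mul K
  have hdist : Filter.Tendsto (fun n => dist (x (φ n)) (y (φ n))) Filter.atTop (nhds 0) := by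
    apply squeeze_zero (fun n => dist_nonneg) (fun n => hd (φ n))
    exact hK0.comp hφ.tendsto_atTop
  have hconv' : Filter.Tendsto (fun n => y (φ n)) Filter.atTop (nhds c) := by
    rw [tendsto_iff_dist_tendsto_zero]
    apply squeeze_zero (fun n => dist_nonneg)
      (fun n => dist_triangle (y (φ n)) (x (φ n)) c)
    have h1 : Filter.Tendsto (fun n => dist (y (φ n)) (x (φ n))) Filter.atTop (nhds 0) := by
      simpa [dist_comm] using hdist
    have h2 : Filter.Tendsto (fun n => dist (x (φ n)) c) Filter.atTop (nhds 0) :=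
      tendsto_iff_dist_tendsto_zero.mp hconv
    simpa using h1.add h2
  have hcB : c ∈ B := hB_cl.mem_of_tendsto hconv'
    (Filter.Eventually.of_forall fun n => hy (φ n))
  exact ⟨c, hcA, hcB⟩
end

section
/- The intersection S of all nonempty closed u-saturated subsets of M is itself a nonempty closed u-saturated set; in particular there is a smallest nonempty closed u-saturated set, which is the unique minimal set of the partition 𝒰. (Theorem 1(1): the strong unstable foliation of a usu-accessible partially hyperbolic diffeomorphism has a unique minimal set.) -/
/-!
Any two nonempty closed u-saturated sets `A ∋ x` and `B ∋ y` meet. Pull `x` and `y` back by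
`fⁿ` and join them by a usu-path: its stable leg, pushed forward by `fⁿ`, joins a point of
`A` to a point of `B` at distance at most `K λⁿ`, by invariance of `𝒰`. So `A` and `B` are
at distance zero, and being compact they intersect. Hence the nonempty closed u-saturated sets
form a directed family, and by Cantor's intersection theorem its intersection is nonempty.
-/

open Set Filter Topology

theorem IsCompact.inter_nonempty_of_forall_exists_dist_lt {α : Type*} [PseudoMetricSpace α]
    {s t : Set α} (hs : IsCompact s) (ht : IsClosed t)
    (h : ∀ ε > 0, ∃ a ∈ s, ∃ b ∈ t, dist a b < ε) : (s ∩ t).Nonempty := by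
  by_contra hst
  rw [not_nonempty_iff_eq_empty, ← disjoint_iff_inter_eq_empty] at hst
  obtain ⟨r, hr, hsep⟩ := Metric.exists_pos_forall_lt_edist hs ht hst
  obtain ⟨a, ha, b, hb, hab⟩ := h r hr
  exact (hsep a ha b hb).not_gt (edist_lt_coe.2 hab)

section Saturation

variable {α : Type*} {𝒰 : α → Set α}

def IsSaturated (𝒰 : α → Set α) (A : Set α) : Prop :=
  ∀ x ∈ A, 𝒰 x ⊆ A

theorem IsSaturated.univ : IsSaturated 𝒰 univ :=
  fun _ _ => subset_univ _

theorem IsSaturated.inter {A B : Set α} (hA : IsSaturated 𝒰 A) (hB : IsSaturated 𝒰 B) :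
    IsSaturated 𝒰 (A ∩ B) :=
  fun x hx => subset_inter (hA x hx.1) (hB x hx.2)

theorem IsSaturated.sInter {𝒜 : Set (Set α)} (h𝒜 : ∀ A ∈ 𝒜, IsSaturated 𝒰 A) :
    IsSaturated 𝒰 (⋂₀ 𝒜) :=
  fun x hx _ hy A hA => h𝒜 A hA x (hx A hA) hy

theorem image_iterate_of_image_eq {f : α → α} (h_inv : ∀ x, f '' 𝒰 x = 𝒰 (f x)) (n : ℕ)
    (x : α) : f^[n] '' 𝒰 x = 𝒰 (f^[n] x) := by
  have h : Function.Semiconj 𝒰 f (image f) := fun x => (h_inv x).symm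
  rw [image_iterate_eq]
  exact (h.iterate_right n x).symm

theorem IsSaturated.iterate_mem_of_mem_symm_iterate (f : α ≃ α)
    (h_inv : ∀ x, f '' 𝒰 x = 𝒰 (f x)) {A : Set α} (hA : IsSaturated 𝒰 A) {x p : α}
    (hx : x ∈ A) {n : ℕ} (hp : p ∈ 𝒰 (f.symm^[n] x)) : f^[n] p ∈ A := by
  refine hA x hx ?_
  rw [← f.rightInverse_symm.iterate n x, ← image_iterate_of_image_eq h_inv]
  exact mem_image_of_mem _ hp

end Saturation

section Accessibility

variable {α : Type*} [MetricSpace α] {𝒰 : α → Set α}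

/-- Points `x`, `y` are joined by an unstable leg `x ⇝ p`, a stable leg `p ⇝ q` contracting
like `K λⁿ`, and an unstable leg `q ⇝ y`. -/
def IsUSUAccessible (f : α → α) (𝒰 : α → Set α) (K l : ℝ) : Prop :=
  ∀ x y : α, ∃ p q : α, p ∈ 𝒰 x ∧ y ∈ 𝒰 q ∧ ∀ n : ℕ, dist (f^[n] p) (f^[n] q) ≤ K * l ^ n

theorem IsUSUAccessible.exists_dist_le {f : α ≃ α} {K l : ℝ} (hacc : IsUSUAccessible f 𝒰 K l)
    (h_self : ∀ x, x ∈ 𝒰 x) (h_part : ∀ x y, y ∈ 𝒰 x → 𝒰 y = 𝒰 x)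
    (h_inv : ∀ x, f '' 𝒰 x = 𝒰 (f x)) {A B : Set α} (hA : IsSaturated 𝒰 A)
    (hB : IsSaturated 𝒰 B) {x y : α} (hx : x ∈ A) (hy : y ∈ B) (n : ℕ) :
    ∃ a ∈ A, ∃ b ∈ B, dist a b ≤ K * l ^ n := by
  obtain ⟨p, q, hp, hq, hpq⟩ := hacc (f.symm^[n] x) (f.symm^[n] y)
  have hq' : q ∈ 𝒰 (f.symm^[n] y) := (h_part q _ hq).symm ▸ h_self q
  exact ⟨_, hA.iterate_mem_of_mem_symm_iterate f h_inv hx hp,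
    _, hB.iterate_mem_of_mem_symm_iterate f h_inv hy hq', hpq n⟩

variable [CompactSpace α]

theorem IsUSUAccessible.inter_nonempty {f : α ≃ α} {K l : ℝ}
    (hacc : IsUSUAccessible f 𝒰 K l) (hl : 0 ≤ l) (hl1 : l < 1)
    (h_self : ∀ x, x ∈ 𝒰 x) (h_part : ∀ x y, y ∈ 𝒰 x → 𝒰 y = 𝒰 x)
    (h_inv : ∀ x, f '' 𝒰 x = 𝒰 (f x)) {A B : Set α}
    (hA : A.Nonempty) (hAc : IsClosed A) (hAs : IsSaturated 𝒰 A)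
    (hB : B.Nonempty) (hBc : IsClosed B) (hBs : IsSaturated 𝒰 B) : (A ∩ B).Nonempty := by
  obtain ⟨x, hx⟩ := hA
  obtain ⟨y, hy⟩ := hB
  refine hAc.isCompact.inter_nonempty_of_forall_exists_dist_lt hBc fun ε hε => ?_
  have hlim : Tendsto (fun n : ℕ => K * l ^ n) atTop (𝓝 0) := by
    simpa using (tendsto_pow_atTop_nhds_zero_of_lt_one hl hl1).const_mul K
  obtain ⟨n, hn⟩ := (hlim.eventually (gt_mem_nhds hε)).exists
  obtain ⟨a, ha, b, hb, hab⟩ := hacc.exists_dist_le h_self h_part h_inv hAs hBs hx hy n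
  exact ⟨a, ha, b, hb, hab.trans_lt hn⟩

theorem IsUSUAccessible.sInter_nonempty [Nonempty α] {f : α ≃ α} {K l : ℝ}
    (hacc : IsUSUAccessible f 𝒰 K l) (hl : 0 ≤ l) (hl1 : l < 1)
    (h_self : ∀ x, x ∈ 𝒰 x) (h_part : ∀ x y, y ∈ 𝒰 x → 𝒰 y = 𝒰 x)
    (h_inv : ∀ x, f '' 𝒰 x = 𝒰 (f x)) :
    (⋂₀ {A : Set α | A.Nonempty ∧ IsClosed A ∧ IsSaturated 𝒰 A}).Nonempty := by
  have : Nonempty {A : Set α | A.Nonempty ∧ IsClosed A ∧ IsSaturated 𝒰 A} :=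
    ⟨⟨univ, univ_nonempty, isClosed_univ, IsSaturated.univ⟩⟩
  refine IsCompact.nonempty_sInter_of_directed_nonempty_isCompact_isClosed ?_
    (fun A hA => hA.1) (fun A hA => hA.2.1.isCompact) (fun A hA => hA.2.1)
  rintro A ⟨hA, hAc, hAs⟩ B ⟨hB, hBc, hBs⟩
  exact ⟨A ∩ B, ⟨hacc.inter_nonempty hl hl1 h_self h_part h_inv hA hAc hAs hB hBc hBs,
    hAc.inter hBc, hAs.inter hBs⟩, inter_subset_left, inter_subset_right⟩

end Accessibility

theorem stmt1_unique_minimal_set_general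
    {M : Type*} [MetricSpace M] [CompactSpace M] [Nonempty M]
    (f : M ≃ₜ M) (𝒰 : M → Set M)
    (h_self : ∀ x : M, x ∈ 𝒰 x)
    (h_part : ∀ x y : M, y ∈ 𝒰 x → 𝒰 y = 𝒰 x)
    (h_inv : ∀ x : M, (⇑f) '' (𝒰 x) = 𝒰 (f x))
    (K l : ℝ) (hl : 0 < l) (hl1 : l < 1)
    (h_acc : ∀ x y : M, ∃ p q : M, p ∈ 𝒰 x ∧ y ∈ 𝒰 q ∧
      ∀ n : ℕ, dist ((⇑f)^[n] p) ((⇑f)^[n] q) ≤ K * l ^ n)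
    (S : Set M)
    (hS : S = ⋂₀ {A : Set M | A.Nonempty ∧ IsClosed A ∧ ∀ x ∈ A, 𝒰 x ⊆ A}) :
    (S.Nonempty ∧ IsClosed S ∧ (∀ x ∈ S, 𝒰 x ⊆ S)) ∧
    (∀ A : Set M, A.Nonempty → IsClosed A → (∀ x ∈ A, 𝒰 x ⊆ A) → S ⊆ A) ∧
    (∀ Λ : Set M, Λ.Nonempty → IsClosed Λ → (∀ x ∈ Λ, 𝒰 x ⊆ Λ) →
      (∀ Λ' : Set M, Λ' ⊆ Λ → Λ'.Nonempty → IsClosed Λ' → (∀ x ∈ Λ', 𝒰 x ⊆ Λ') → Λ' = Λ) →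
      Λ = S) := by
  have hacc : IsUSUAccessible f.toEquiv 𝒰 K l := h_acc
  have hSne : S.Nonempty := hS ▸ hacc.sInter_nonempty hl.le hl1 h_self h_part h_inv
  have hSc : IsClosed S := hS ▸ isClosed_sInter fun A hA => hA.2.1
  have hSs : IsSaturated 𝒰 S := hS ▸ IsSaturated.sInter fun A hA => hA.2.2
  have hS_le : ∀ A : Set M, A.Nonempty → IsClosed A → IsSaturated 𝒰 A → S ⊆ A :=
    fun A hA hAc hAs => hS ▸ sInter_subset_of_mem ⟨hA, hAc, hAs⟩
  refine ⟨⟨hSne, hSc, hSs⟩, hS_le, fun Λ hΛ hΛc hΛs hmin => ?_⟩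
  exact (hmin S (hS_le Λ hΛ hΛc hΛs) hSne hSc hSs).symm

/-- Under usu-accessibility, the intersection `S` of all nonempty closed
u-saturated subsets of `M` is itself a nonempty closed u-saturated set (hence it is the
smallest nonempty closed u-saturated set), and it is the unique minimal set of the
partition `𝒰`: every minimal nonempty closed u-saturated set equals `S`. -/
theorem stmt1_unique_minimal_set
    {M : Type*} [MetricSpace M] [CompactSpace M] [Nonempty M]
    (f : M ≃ₜ M) (𝒰 : M → Set M)
    (h_self : ∀ x : M, x ∈ 𝒰 x)
    (h_part : ∀ x y : M, y ∈ 𝒰 x → 𝒰 y = 𝒰 x)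
    (h_inv : ∀ x : M, (⇑f) '' (𝒰 x) = 𝒰 (f x))
    (K l : ℝ) (hK : 0 < K) (hl : 0 < l) (hl1 : l < 1)
    (h_acc : ∀ x y : M, ∃ p q : M, p ∈ 𝒰 x ∧ y ∈ 𝒰 q ∧
      ∀ n : ℕ, dist ((⇑f)^[n] p) ((⇑f)^[n] q) ≤ K * l ^ n)
    (S : Set M)
    (hS : S = ⋂₀ {A : Set M | A.Nonempty ∧ IsClosed A ∧ ∀ x ∈ A, 𝒰 x ⊆ A}) :
    (S.Nonempty ∧ IsClosed S ∧ (∀ x ∈ S, 𝒰 x ⊆ S)) ∧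
    (∀ A : Set M, A.Nonempty → IsClosed A → (∀ x ∈ A, 𝒰 x ⊆ A) → S ⊆ A) ∧
    (∀ Λ : Set M, Λ.Nonempty → IsClosed Λ → (∀ x ∈ Λ, 𝒰 x ⊆ Λ) →
      (∀ Λ' : Set M, Λ' ⊆ Λ → Λ'.Nonempty → IsClosed Λ' → (∀ x ∈ Λ', 𝒰 x ⊆ Λ') → Λ' = Λ) →
      Λ = S) :=
  stmt1_unique_minimal_set_general f 𝒰 h_self h_part h_inv K l hl hl1 h_acc S hS
end

section
/- Call a nonempty closed u-saturated set Λ ⊆ M minimal if every nonempty closed u-saturated subset of Λ equals Λ. Then any two minimal sets Λ₁ and Λ₂ coincide: Λ₁ = Λ₂. -/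
/-- Under usu-accessibility, call a nonempty closed u-saturated set
`Λ ⊆ M` minimal if every nonempty closed u-saturated subset of `Λ` equals `Λ`.
Then any two minimal sets coincide. -/
theorem stmt2_minimal_sets_coincide
    {M : Type*} [MetricSpace M] [CompactSpace M] [Nonempty M]
    (f : M ≃ₜ M) (𝒰 : M → Set M)
    (h_self : ∀ x : M, x ∈ 𝒰 x)
    (h_part : ∀ x y : M, y ∈ 𝒰 x → 𝒰 y = 𝒰 x)
    (h_inv : ∀ x : M, (⇑f) '' (𝒰 x) = 𝒰 (f x))
    (K l : ℝ) (hK : 0 < K) (hl : 0 < l) (hl1 : l < 1)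
    (h_acc : ∀ x y : M, ∃ p q : M, p ∈ 𝒰 x ∧ y ∈ 𝒰 q ∧
      ∀ n : ℕ, dist ((⇑f)^[n] p) ((⇑f)^[n] q) ≤ K * l ^ n)
    (Λ₁ Λ₂ : Set M)
    (h₁_ne : Λ₁.Nonempty) (h₁_cl : IsClosed Λ₁) (h₁_sat : ∀ x ∈ Λ₁, 𝒰 x ⊆ Λ₁)
    (h₁_min : ∀ Λ' : Set M, Λ' ⊆ Λ₁ → Λ'.Nonempty → IsClosed Λ' →
      (∀ x ∈ Λ', 𝒰 x ⊆ Λ') → Λ' = Λ₁)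
    (h₂_ne : Λ₂.Nonempty) (h₂_cl : IsClosed Λ₂) (h₂_sat : ∀ x ∈ Λ₂, 𝒰 x ⊆ Λ₂)
    (h₂_min : ∀ Λ' : Set M, Λ' ⊆ Λ₂ → Λ'.Nonempty → IsClosed Λ' →
      (∀ x ∈ Λ', 𝒰 x ⊆ Λ') → Λ' = Λ₂) :
    Λ₁ = Λ₂ := by
  -- iterated invariance of the partition
  have key : ∀ (n : ℕ) (x : M), (⇑f)^[n] '' 𝒰 x = 𝒰 ((⇑f)^[n] x) := by
    intro n
    induction n with
    | zero => intro x; simp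
    | succ n ih =>
      intro x
      rw [Function.iterate_succ' (⇑f) n, Function.comp_apply,
        ← h_inv ((⇑f)^[n] x), ← ih x, Set.image_comp]
  have hsymm : ∀ (n : ℕ) (u : M), (⇑f)^[n] ((⇑f.symm)^[n] u) = u := by
    intro n u
    exact (Function.LeftInverse.iterate f.apply_symm_apply n) u
  obtain ⟨u, hu⟩ := h₁_ne
  obtain ⟨v, hv⟩ := h₂_ne
  -- for each n, find points of Λ₁ and Λ₂ at distance ≤ K * l ^ n
  have main : ∀ n : ℕ, ∃ a ∈ Λ₁, ∃ b ∈ Λ₂, dist a b ≤ K * l ^ n := by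
    intro n
    obtain ⟨p, q, hp, hq, hd⟩ := h_acc ((⇑f.symm)^[n] u) ((⇑f.symm)^[n] v)
    refine ⟨(⇑f)^[n] p, ?_, (⇑f)^[n] q, ?_, hd n⟩
    · have : (⇑f)^[n] p ∈ (⇑f)^[n] '' 𝒰 ((⇑f.symm)^[n] u) := ⟨p, hp, rfl⟩
      rw [key, hsymm] at this
      exact h₁_sat u hu this
    · have hq' : q ∈ 𝒰 ((⇑f.symm)^[n] v) := by
        rw [h_part q _ hq]; exact h_self q
      have : (⇑f)^[n] q ∈ (⇑f)^[n] '' 𝒰 ((⇑f.symm)^[n] v) := ⟨q, hq', rfl⟩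
      rw [key, hsymm] at this
      exact h₂_sat v hv this
  choose a ha b hb hab using main
  -- extract a convergent subsequence of a
  obtain ⟨z, hz₁, φ, hφ, hlim⟩ := (h₁_cl.isCompact).tendsto_subseq ha
  -- dist (a n) (b n) → 0
  have hd0 : Filter.Tendsto (fun n => dist (a n) (b n)) Filter.atTop (nhds 0) := by
    have h1 : Filter.Tendsto (fun n : ℕ => K * l ^ n) Filter.atTop (nhds 0) := by
      have := tendsto_pow_atTop_nhds_zero_of_lt_one hl.le hl1
      simpa using this.const_mul K
    exact squeeze_zero (fun n => dist_nonneg) hab h1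
  have hblim : Filter.Tendsto (fun n => b (φ n)) Filter.atTop (nhds z) := by
    have hd0' : Filter.Tendsto (fun n => dist (a (φ n)) (b (φ n)))
        Filter.atTop (nhds 0) := hd0.comp hφ.tendsto_atTop
    rw [tendsto_iff_dist_tendsto_zero]
    have : ∀ n, dist (b (φ n)) z ≤ dist (a (φ n)) (b (φ n)) + dist (a (φ n)) z := by
      intro n
      calc dist (b (φ n)) z ≤ dist (b (φ n)) (a (φ n)) + dist (a (φ n)) z :=
            dist_triangle _ _ _
        _ = dist (a (φ n)) (b (φ n)) + dist (a (φ n)) z := by rw [dist_comm]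
    have hlim' : Filter.Tendsto (fun n => dist (a (φ n)) z) Filter.atTop (nhds 0) := by
      rw [← tendsto_iff_dist_tendsto_zero]; exact hlim
    have hsum := hd0'.add hlim'
    rw [add_zero] at hsum
    exact squeeze_zero (fun n => dist_nonneg) this hsum
  have hz₂ : z ∈ Λ₂ := h₂_cl.mem_of_tendsto hblim (Filter.Eventually.of_forall fun n => hb _)
  -- Λ₁ ∩ Λ₂ is nonempty, closed, saturated
  have hne : (Λ₁ ∩ Λ₂).Nonempty := ⟨z, hz₁, hz₂⟩
  have hcl : IsClosed (Λ₁ ∩ Λ₂) := h₁_cl.inter h₂_cl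
  have hsat : ∀ x ∈ Λ₁ ∩ Λ₂, 𝒰 x ⊆ Λ₁ ∩ Λ₂ := fun x hx =>
    Set.subset_inter (h₁_sat x hx.1) (h₂_sat x hx.2)
  have e₁ := h₁_min _ Set.inter_subset_left hne hcl hsat
  have e₂ := h₂_min _ Set.inter_subset_right hne hcl hsat
  exact e₁.symm.trans e₂
end

section
/- For any two nonempty open subsets U and V of M there exists z ∈ M whose stable class 𝒮(z) intersects both U and V, i.e. 𝒮(z) ∩ U ≠ ∅ and 𝒮(z) ∩ V ≠ ∅. (This is the core step in the proof that the strong stable foliation of a usu-accessible partially hyperbolic diffeomorphism is transitive, Theorem 1(2).) -/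
/-- Let `M` be a metric space, `f` a homeomorphism of `M`, and `𝒮` a stable
partition for `f`. If `(f, 𝒮)` is backward-usu-accessible with constants `K > 0` and
`λ ∈ (0,1)`, then for any two nonempty open subsets `U` and `V` of `M` there exists `z ∈ M`
whose stable class `𝒮(z)` intersects both `U` and `V`. -/
theorem stmt4_stable_class_meets_two_open_sets
    {M : Type*} [MetricSpace M]
    (f : M ≃ₜ M) (𝒮 : M → Set M)
    (h_self : ∀ x : M, x ∈ 𝒮 x)
    (h_part : ∀ x y : M, y ∈ 𝒮 x → 𝒮 y = 𝒮 x)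
    (h_inv : ∀ x : M, (⇑f) '' (𝒮 x) = 𝒮 (f x))
    (K l : ℝ) (hK : 0 < K) (hl : 0 < l) (hl1 : l < 1)
    (h_acc : ∀ x y : M, ∃ p q : M, q ∈ 𝒮 p ∧
      (∀ n : ℕ, dist ((⇑f.symm)^[n] x) ((⇑f.symm)^[n] p) ≤ K * l ^ n) ∧
      (∀ n : ℕ, dist ((⇑f.symm)^[n] y) ((⇑f.symm)^[n] q) ≤ K * l ^ n))
    (U V : Set M) (hU_op : IsOpen U) (hU_ne : U.Nonempty)
    (hV_op : IsOpen V) (hV_ne : V.Nonempty) :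
    ∃ z : M, (𝒮 z ∩ U).Nonempty ∧ (𝒮 z ∩ V).Nonempty := by
  -- single-step equivariance for the inverse
  have hstep : ∀ x : M, (⇑f.symm) '' (𝒮 x) = 𝒮 (f.symm x) := by
    intro x
    have h := h_inv (f.symm x)
    rw [f.apply_symm_apply] at h
    calc (⇑f.symm) '' (𝒮 x) = (⇑f.symm) '' ((⇑f) '' (𝒮 (f.symm x))) := by rw [h]
      _ = 𝒮 (f.symm x) := by
          rw [Set.image_image]; simp
  have hiter : ∀ (n : ℕ) (p q : M), q ∈ 𝒮 p → (⇑f.symm)^[n] q ∈ 𝒮 ((⇑f.symm)^[n] p) := by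
    intro n
    induction n with
    | zero => intro p q h; exact h
    | succ n ih =>
      intro p q h
      rw [Function.iterate_succ_apply', Function.iterate_succ_apply', ← hstep]
      exact Set.mem_image_of_mem _ (ih p q h)
  obtain ⟨x₀, hx₀⟩ := hU_ne
  obtain ⟨y₀, hy₀⟩ := hV_ne
  obtain ⟨ε₁, hε₁, hball₁⟩ := Metric.isOpen_iff.mp hU_op x₀ hx₀
  obtain ⟨ε₂, hε₂, hball₂⟩ := Metric.isOpen_iff.mp hV_op y₀ hy₀
  set ε := min ε₁ ε₂
  have hε : 0 < ε := lt_min hε₁ hε₂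
  -- choose n with K * l ^ n < ε
  obtain ⟨n, hn⟩ := exists_pow_lt_of_lt_one (div_pos hε hK) hl1
  have hKn : K * l ^ n < ε := by
    rw [mul_comm]
    exact (lt_div_iff₀ hK).mp hn
  obtain ⟨p, q, hpq, hp, hq⟩ := h_acc ((⇑f)^[n] x₀) ((⇑f)^[n] y₀)
  have hxfix : (⇑f.symm)^[n] ((⇑f)^[n] x₀) = x₀ := by
    have := Function.LeftInverse.iterate f.symm_apply_apply n
    exact this x₀
  have hyfix : (⇑f.symm)^[n] ((⇑f)^[n] y₀) = y₀ := by
    have := Function.LeftInverse.iterate f.symm_apply_apply n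
    exact this y₀
  refine ⟨(⇑f.symm)^[n] p, ⟨(⇑f.symm)^[n] p, h_self _, ?_⟩, ⟨(⇑f.symm)^[n] q, hiter n p q hpq, ?_⟩⟩
  · apply hball₁
    have := hp n
    rw [hxfix] at this
    rw [Metric.mem_ball, dist_comm]
    exact lt_of_le_of_lt this (lt_of_lt_of_le hKn (min_le_left _ _))
  · apply hball₂
    have := hq n
    rw [hyfix] at this
    rw [Metric.mem_ball, dist_comm]
    exact lt_of_le_of_lt this (lt_of_lt_of_le hKn (min_le_right _ _))
end

section
/- If K ⊆ X × 𝕊¹ is closed and rotation-coherent, and the fiber K_y is infinite for some y ∈ X, then K_y = 𝕊¹, i.e. the whole circle fiber {y} × 𝕊¹ is contained in K. (This is the first claim in the proof of the Proposition on skew products: a minimal set of the strong unstable foliation of an isometric circle extension cannot meet any circle fiber in an infinite proper subset.) -/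
/-! Rotation-coherence makes the fiber `K_y` a coset `θ₀ + T` of the subgroup `T` of rotations
preserving `K`; closedness of `K` makes `T` closed. An infinite subgroup of the circle is not
generated by a torsion element, hence dense, so a closed infinite `T` is the whole circle. -/

open Set

namespace AddCircle

variable {p : ℝ} [Fact (0 < p)]

theorem dense_addSubgroup_of_infinite {s : AddSubgroup (AddCircle p)}
    (hs : (s : Set (AddCircle p)).Infinite) : Dense (s : Set (AddCircle p)) :=
  dense_addSubgroup_iff_ne_zmultiples.2 fun _ ha hsa =>
    hs <| hsa ▸ IsOfFinAddOrder.finite_zmultiples (not_not.1 (mt addOrderOf_eq_zero_iff.2 ha))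

theorem addSubgroup_eq_top_of_isClosed_of_infinite {s : AddSubgroup (AddCircle p)}
    (hc : IsClosed (s : Set (AddCircle p))) (hs : (s : Set (AddCircle p)).Infinite) : s = ⊤ :=
  SetLike.coe_injective <| by
    rw [AddSubgroup.coe_top, ← hc.closure_eq, (dense_addSubgroup_of_infinite hs).closure_eq]

end AddCircle

section RotationCoherent

variable {X A : Type*} [AddCommGroup A]

def IsRotationCoherent (K : Set (X × A)) : Prop :=
  ∀ α : A, ((fun p : X × A => (p.1, p.2 + α)) '' K ∩ K).Nonempty →
    (fun p : X × A => (p.1, p.2 + α)) '' K = K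

variable {K : Set (X × A)}

theorem IsRotationCoherent.add_sub_mem (hK : IsRotationCoherent K) {y : X} {σ θ θ' : A}
    (hσ : (y, σ) ∈ K) (hθ : (y, θ) ∈ K) (hθ' : (y, θ') ∈ K) : (y, σ + (θ' - θ)) ∈ K := by
  have hrot := hK (θ' - θ) ⟨(y, θ'), ⟨(y, θ), hθ, by simp⟩, hθ'⟩
  exact hrot ▸ mem_image_of_mem _ hσ

def fiberRotationSubgroup (hK : IsRotationCoherent K) {y : X} {θ₀ : A} (hθ₀ : (y, θ₀) ∈ K) :
    AddSubgroup A :=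
  AddSubgroup.ofSub {α | (y, θ₀ + α) ∈ K} ⟨0, by simpa using hθ₀⟩ fun a ha b hb => by
    have h := hK.add_sub_mem ha hb hθ₀
    rwa [show θ₀ + a + (θ₀ - (θ₀ + b)) = θ₀ + (a + -b) by abel] at h

theorem mem_fiberRotationSubgroup (hK : IsRotationCoherent K) {y : X} {θ₀ : A}
    (hθ₀ : (y, θ₀) ∈ K) {α : A} :
    α ∈ fiberRotationSubgroup hK hθ₀ ↔ (y, θ₀ + α) ∈ K :=
  Iff.rfl

end RotationCoherent

/-- Let `𝕊¹ = ℝ/ℤ` and `X` a topological space. If `K ⊆ X × 𝕊¹` is closed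
and rotation-coherent (for every `α`, if the fiber rotation `G_α` satisfies
`G_α(K) ∩ K ≠ ∅` then `G_α(K) = K`), and the fiber `K_y` is infinite for some `y ∈ X`,
then `K_y = 𝕊¹`, i.e. the whole circle fiber `{y} × 𝕊¹` is contained in `K`. -/
theorem stmt6_infinite_fiber_is_whole_circle
    {X : Type*} [TopologicalSpace X]
    (K : Set (X × AddCircle (1 : ℝ)))
    (hK_cl : IsClosed K)
    (hK_rot : ∀ α : AddCircle (1 : ℝ),
      ((fun p : X × AddCircle (1 : ℝ) => (p.1, p.2 + α)) '' K ∩ K).Nonempty →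
      (fun p : X × AddCircle (1 : ℝ) => (p.1, p.2 + α)) '' K = K)
    (y : X)
    (h_inf : {θ : AddCircle (1 : ℝ) | (y, θ) ∈ K}.Infinite) :
    {θ : AddCircle (1 : ℝ) | (y, θ) ∈ K} = Set.univ := by
  obtain ⟨θ₀, hθ₀⟩ := h_inf.nonempty
  set T := fiberRotationSubgroup hK_rot hθ₀
  have hT_closed : IsClosed (T : Set (AddCircle (1 : ℝ))) :=
    hK_cl.preimage (by fun_prop : Continuous fun α => (y, θ₀ + α))
  have hT_infinite : (T : Set (AddCircle (1 : ℝ))).Infinite :=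
    h_inf.preimage (by simp [(add_left_surjective θ₀).range_eq])
  have hT_top : T = ⊤ :=
    AddCircle.addSubgroup_eq_top_of_isClosed_of_infinite hT_closed hT_infinite
  refine eq_univ_of_forall fun θ => ?_
  have hθ : θ - θ₀ ∈ T := hT_top ▸ AddSubgroup.mem_top _
  simpa using (mem_fiberRotationSubgroup hK_rot hθ₀).1 hθ
end
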